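/- If χ(G) ≥ 3, then G is uniquely 3-colorable if and only if F_χ(G × K₃) = 2, where G × K₃ is the Cartesian product of G with a triangle. -/

import Mathlib

open SimpleGraph

def properCol {V : Type*} (G : SimpleGraph V) (s : ℕ) (c : V → Fin s) : Prop :=
  ∀ ⦃u v⦄, G.Adj u v → c u ≠ c v

noncomputable def chrom {V : Type*} [Fintype V] (G : SimpleGraph V) : ℕ :=
  sInf {s | ∃ c : V → Fin s, properCol G s c}

def IsForcingSet {V : Type*} [Fintype V] (G : SimpleGraph V) (D : Finset V) : Prop :=
  ∃ p : V → Fin (chrom G), ∃! c : V → Fin (chrom G),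
    properCol G (chrom G) c ∧ ∀ v ∈ D, c v = p v

noncomputable def Fchi {V : Type*} [Fintype V] (G : SimpleGraph V) : ℕ :=
  sInf {k | ∃ D : Finset V, D.card = k ∧ IsForcingSet G D}

noncomputable def Npart {V : Type*} (G : SimpleGraph V) (s : ℕ) : ℕ :=
  Nat.card {r : V → V → Prop // ∃ c : V → Fin s,
    properCol G s c ∧ r = fun u v => c u = c v}

def tensorProd {V W : Type*} (G : SimpleGraph V) (H : SimpleGraph W) :
    SimpleGraph (V × W) where
  Adj x y := G.Adj x.1 y.1 ∧ H.Adj x.2 y.2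
  symm := ⟨fun _ _ h => ⟨h.1.symm, h.2.symm⟩⟩
  loopless := ⟨fun x h => G.loopless.irrefl x.1 h.1⟩

/-!
On each layer `G × {m}` a proper 3-colouring `C` of `G □ K₃` restricts to a 3-colouring of `G`.
If `G` is uniquely 3-colourable with colouring `c₀`, every layer induces the partition of `c₀`, so
`C (u, m) = L (c₀ u) m` for a latin square `L` of order three. Such a square is determined by two
entries lying in different rows, columns and symbols, so two suitably precoloured vertices in
different layers force `C`.

Conversely, let two precoloured vertices force `C`. They lie in different layers (else exchange the
two other layers) and get different colours (else exchange the two other colours). For every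
3-colouring `a` of `G` some lift `(u, m) ↦ L (a u) m` matches the precolouring, hence equals `C`;
so every `a` induces the partition of `C` on layer `0`. Finally a forcing set misses at most one
colour, so it has at least `χ - 1` vertices, which gives `χ(G) = 3`.
-/

open Function

def IsLatin {α β γ : Type*} (L : α → β → γ) : Prop :=
  (∀ a, Injective (L a)) ∧ ∀ b, Injective fun a => L a b

lemma Fin.eq_of_ne_of_ne_three {x y z z' : Fin 3} (hxy : x ≠ y) (hzx : z ≠ x) (hzy : z ≠ y)
    (hz'x : z' ≠ x) (hz'y : z' ≠ y) : z = z' := by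
  revert x y z z'
  decide

lemma Function.Injective.eq_of_eq_of_eq_fin_three {α : Type*} {f g : α → Fin 3}
    (hf : Injective f) (hg : Injective g) {i j : α} (hij : i ≠ j) (hi : f i = g i)
    (hj : f j = g j) : f = g := by
  funext k
  by_cases hki : k = i
  · rwa [hki]
  by_cases hkj : k = j
  · rwa [hkj]
  refine Fin.eq_of_ne_of_ne_three (hf.ne hij) (hf.ne hki) (hf.ne hkj) ?_ ?_
  · rw [hi]; exact hg.ne hki
  · rw [hj]; exact hg.ne hkj

namespace IsLatin

variable {α β γ δ : Type*} {L : α → β → γ}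

lemma add {A : Type*} [AddGroup A] : IsLatin fun a b : A => a + b :=
  ⟨add_right_injective, add_left_injective⟩

lemma comp_left (hL : IsLatin L) {σ : γ → δ} (hσ : Injective σ) :
    IsLatin fun a b => σ (L a b) :=
  ⟨fun a => hσ.comp (hL.1 a), fun b => hσ.comp (hL.2 b)⟩

lemma comp_right (hL : IsLatin L) {τ : δ → β} (hτ : Injective τ) :
    IsLatin fun a b => L a (τ b) :=
  ⟨fun a => (hL.1 a).comp hτ, fun b => hL.2 (τ b)⟩

lemma ext_fin_three {L L' : α → β → Fin 3} (hL : IsLatin L) (hL' : IsLatin L') {a b : α}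
    {i j : β} (hab : a ≠ b) (hij : i ≠ j) (hi : L a i = L' a i) (hj : L b j = L' b j)
    (hv : L a i ≠ L b j) : L = L' := by
  have haj : L a j = L' a j := by
    refine Fin.eq_of_ne_of_ne_three hv ((hL.1 a).ne hij.symm) ((hL.2 j).ne hab) ?_ ?_
    · rw [hi]; exact (hL'.1 a).ne hij.symm
    · rw [hj]; exact (hL'.2 j).ne hab
  have hbi : L b i = L' b i := by
    refine Fin.eq_of_ne_of_ne_three hv ((hL.2 i).ne hab.symm) ((hL.1 b).ne hij) ?_ ?_
    · rw [hi]; exact (hL'.2 i).ne hab.symm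
    · rw [hj]; exact (hL'.1 b).ne hij
  have hrow_a := (hL.1 a).eq_of_eq_of_eq_fin_three (hL'.1 a) hij hi haj
  have hrow_b := (hL.1 b).eq_of_eq_of_eq_fin_three (hL'.1 b) hij hbi hj
  funext r m
  exact congrFun ((hL.2 m).eq_of_eq_of_eq_fin_three (hL'.2 m) hab (congrFun hrow_a m)
    (congrFun hrow_b m)) r

lemma exists_fin_three (r₁ r₂ : Fin 3) {i j v₁ v₂ : Fin 3} (hij : i ≠ j) (hv : v₁ ≠ v₂) :
    ∃ L : Fin 3 → Fin 3 → Fin 3, IsLatin L ∧ L r₁ i = v₁ ∧ L r₂ j = v₂ := by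
  obtain ⟨τ, hτ⟩ : ∃ τ : Equiv.Perm (Fin 3), r₁ + τ i ≠ r₂ + τ j := by
    revert r₁ r₂ i j
    decide
  obtain ⟨σ, h₁, h₂⟩ : ∃ σ : Equiv.Perm (Fin 3), σ (r₁ + τ i) = v₁ ∧ σ (r₂ + τ j) = v₂ := by
    revert hτ hv
    generalize r₁ + τ i = z₁
    generalize r₂ + τ j = z₂
    revert z₁ z₂ v₁ v₂
    decide
  exact ⟨_, (IsLatin.add.comp_right τ.injective).comp_left σ.injective, h₁, h₂⟩

end IsLatin

namespace properCol

variable {V W : Type*} {G : SimpleGraph V} {H : SimpleGraph W} {s t : ℕ}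

lemma comp_left {c : V → Fin s} (hc : properCol G s c) {f : Fin s → Fin t} (hf : Injective f) :
    properCol G t (f ∘ c) :=
  fun _ _ huv h => hc huv (hf h)

lemma comp_hom {c : W → Fin s} (hc : properCol H s c) (f : G →g H) : properCol G s (c ∘ f) :=
  fun _ _ huv => hc (f.map_adj huv)

lemma top_id : properCol (⊤ : SimpleGraph (Fin s)) s id :=
  fun _ _ h => h

lemma boxProd_latin {k : ℕ} {c : V → Fin s} {d : W → Fin k} (hc : properCol G s c)
    (hd : properCol H k d) {L : Fin s → Fin k → Fin t} (hL : IsLatin L) :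
    properCol (G □ H) t fun x => L (c x.1) (d x.2) := by
  rintro ⟨u, m⟩ ⟨v, m'⟩ (⟨huv, rfl : m = m'⟩ | ⟨hmm, rfl : u = v⟩) h
  · exact hc huv (hL.2 _ h)
  · exact hd hmm (hL.1 _ h)

lemma precomp_layers {C : V × W → Fin s} (hC : properCol (G □ (⊤ : SimpleGraph W)) s C)
    {π : W → W} (hπ : Injective π) : properCol (G □ ⊤) s fun x => C (x.1, π x.2) := by
  rintro ⟨u, m⟩ ⟨v, m'⟩ (⟨huv, rfl : m = m'⟩ | ⟨hmm, rfl : u = v⟩)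
  · exact hC (Or.inl ⟨huv, rfl⟩)
  · exact hC (Or.inr ⟨hπ.ne hmm, rfl⟩)

variable [Fintype V]

lemma chrom_le {c : V → Fin s} (hc : properCol G s c) : chrom G ≤ s :=
  Nat.sInf_le ⟨c, hc⟩

lemma surjective {c : V → Fin s} (hc : properCol G s c) (hs : chrom G = s) : Surjective c := by
  classical
  let e := Fintype.equivFin (Set.range c)
  have hcard : chrom G ≤ Fintype.card (Set.range c) := chrom_le (c := fun v => e ⟨c v, v, rfl⟩)
    fun u v huv h => hc huv (congrArg Subtype.val (e.injective h))
  rw [← Set.range_eq_univ, ← Set.toFinset_eq_univ, ← Finset.card_eq_iff_eq_univ,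
    Set.toFinset_card, Fintype.card_fin]
  exact le_antisymm ((set_fintype_card_le_univ _).trans_eq (Fintype.card_fin s))
    (hs ▸ hcard)

end properCol

section Chrom

variable {V : Type*} [Fintype V] {G : SimpleGraph V} {s : ℕ}

lemma exists_properCol_chrom : ∃ c : V → Fin (chrom G), properCol G (chrom G) c :=
  Nat.sInf_mem (s := {s | ∃ c : V → Fin s, properCol G s c}) ⟨_, fun v => Fintype.equivFin V v,
    fun _ _ huv h => G.ne_of_adj huv ((Fintype.equivFin V).injective h)⟩

lemma exists_properCol_of_chrom_eq (hs : chrom G = s) : ∃ c : V → Fin s, properCol G s c :=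
  hs ▸ exists_properCol_chrom

end Chrom

lemma Npart_eq_one_iff {V : Type*} {G : SimpleGraph V} {s : ℕ} :
    Npart G s = 1 ↔ (∃ c : V → Fin s, properCol G s c) ∧
      ∀ a b : V → Fin s, properCol G s a → properCol G s b → ∀ u v, a u = a v ↔ b u = b v := by
  rw [Npart, Nat.card_eq_one_iff_unique, and_comm]
  refine and_congr ⟨fun ⟨⟨_, c, hc, _⟩⟩ => ⟨c, hc⟩, fun ⟨c, hc⟩ => ⟨⟨_, c, hc, rfl⟩⟩⟩ ⟨?_, ?_⟩
  · intro h a b ha hb u v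
    have := Subtype.ext_iff.mp (h.elim ⟨_, a, ha, rfl⟩ ⟨_, b, hb, rfl⟩)
    exact iff_of_eq (congrFun (congrFun this u) v)
  · refine fun h => ⟨?_⟩
    rintro ⟨_, a, ha, rfl⟩ ⟨_, b, hb, rfl⟩
    ext u v
    exact h a b ha hb u v

def IsForcedBy {W : Type*} (H : SimpleGraph W) (s : ℕ) (D : Finset W) (C : W → Fin s) : Prop :=
  properCol H s C ∧ ∀ C', properCol H s C' → (∀ d ∈ D, C' d = C d) → C' = C

section Forcing

variable {W : Type*} [Fintype W] {H : SimpleGraph W} {D : Finset W} {s : ℕ}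

lemma isForcingSet_iff (hs : chrom H = s) :
    IsForcingSet H D ↔ ∃ C : W → Fin s, IsForcedBy H s D C := by
  subst hs
  constructor
  · rintro ⟨p, C, ⟨hC, hCp⟩, huniq⟩
    exact ⟨C, hC, fun C' hC' hC'C => huniq C' ⟨hC', fun d hd => (hC'C d hd).trans (hCp d hd)⟩⟩
  · rintro ⟨C, hC, huniq⟩
    exact ⟨C, C, ⟨hC, fun _ _ => rfl⟩, fun C' h => huniq C' h.1 h.2⟩

/-- Otherwise two colours unused on `D` could be swapped. -/
lemma IsForcedBy.le_card_image_add_one {C : W → Fin s} (h : IsForcedBy H s D C)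
    (hs : chrom H = s) : s ≤ (D.image C).card + 1 := by
  by_contra! hlt
  have hmissing : 1 < (D.image C)ᶜ.card := by
    rw [Finset.card_compl, Fintype.card_fin]
    omega
  obtain ⟨q, hq, r, hr, hqr⟩ := Finset.one_lt_card.mp hmissing
  have hswap : Equiv.swap q r ∘ C = C := by
    refine h.2 _ (h.1.comp_left (Equiv.injective _)) fun d hd => ?_
    refine Equiv.swap_apply_of_ne_of_ne ?_ ?_ <;> rintro rfl
    · exact Finset.mem_compl.mp hq (Finset.mem_image_of_mem C hd)
    · exact Finset.mem_compl.mp hr (Finset.mem_image_of_mem C hd)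
  obtain ⟨w, hw⟩ := h.1.surjective hs q
  have := congrFun hswap w
  simp only [comp_apply, hw, Equiv.swap_apply_left] at this
  exact hqr this.symm

lemma IsForcingSet.chrom_le_card_add_one (h : IsForcingSet H D) : chrom H ≤ D.card + 1 := by
  obtain ⟨C, hC⟩ := (isForcingSet_iff rfl).mp h
  exact (hC.le_card_image_add_one rfl).trans (Nat.add_le_add_right Finset.card_image_le 1)

lemma Fchi_le (h : IsForcingSet H D) : Fchi H ≤ D.card :=
  Nat.sInf_le ⟨D, rfl, h⟩

lemma exists_isForcingSet_card_Fchi (h : Fchi H ≠ 0) :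
    ∃ D : Finset W, D.card = Fchi H ∧ IsForcingSet H D :=
  Nat.sInf_mem (Nat.nonempty_of_pos_sInf (Nat.pos_of_ne_zero h))

lemma IsForcingSet.chrom_le_Fchi_add_one (h : IsForcingSet H D) : chrom H ≤ Fchi H + 1 := by
  obtain ⟨D', hD', h'⟩ : ∃ D' : Finset W, D'.card = Fchi H ∧ IsForcingSet H D' :=
    Nat.sInf_mem (s := {k | ∃ D : Finset W, D.card = k ∧ IsForcingSet H D}) ⟨_, D, rfl, h⟩
  exact hD' ▸ h'.chrom_le_card_add_one

end Forcing

section BoxTriangle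

variable {V : Type*} {G : SimpleGraph V}

lemma exists_latin_of_Npart_eq_one {W : Type*} {s : ℕ} (hN : Npart G s = 1) {c₀ : V → Fin s}
    (hc₀ : properCol G s c₀) (hsurj : Surjective c₀) {C : V × W → Fin s}
    (hC : properCol (G □ (⊤ : SimpleGraph W)) s C) :
    ∃ L : Fin s → W → Fin s, IsLatin L ∧ ∀ x, C x = L (c₀ x.1) x.2 := by
  have hker : ∀ m u v, C (u, m) = C (v, m) ↔ c₀ u = c₀ v := fun m =>
    (Npart_eq_one_iff.mp hN).2 _ _ (hC.comp_hom (boxProdLeft G ⊤ m).toHom) hc₀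
  refine ⟨fun r m => C (surjInv hsurj r, m), ⟨fun r m m' h => ?_, fun m r r' h => ?_⟩, ?_⟩
  · by_contra hne
    exact hC (boxProd_adj_right.mpr hne) h
  · simpa [surjInv_eq] using (hker m _ _).mp h
  · rintro ⟨u, m⟩
    exact (hker m _ _).mpr (surjInv_eq hsurj _).symm

lemma isForcedBy_of_Npart_eq_one [DecidableEq V] (hN : Npart G 3 = 1) {c₀ : V → Fin 3}
    (hc₀ : properCol G 3 c₀) (hsurj : Surjective c₀) {x y : V} (hx : c₀ x = 0) (hy : c₀ y = 1) :
    IsForcedBy (G □ ⊤) 3 ({(x, 0), (y, 1)} : Finset (V × Fin 3)) fun w => c₀ w.1 + w.2 := by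
  refine ⟨hc₀.boxProd_latin properCol.top_id IsLatin.add, fun C hC hCD => ?_⟩
  obtain ⟨L, hL, hCL⟩ := exists_latin_of_Npart_eq_one hN hc₀ hsurj hC
  have h₀ : L 0 0 = 0 + 0 := by simpa [hCL, hx] using hCD (x, 0) (by simp)
  have h₁ : L 1 1 = 1 + 1 := by simpa [hCL, hy] using hCD (y, 1) (by simp)
  have hL₀ : L = fun r m => r + m :=
    hL.ext_fin_three IsLatin.add (by decide) (by decide) h₀ h₁ (by rw [h₀, h₁]; decide)
  funext w
  rw [hCL, hL₀]

section Pair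

variable [DecidableEq V] {C : V × Fin 3 → Fin 3} {x y : V} {i j : Fin 3}

/-- Otherwise exchanging the two other layers would give a second extension. -/
lemma IsForcedBy.snd_ne_snd
    (h : IsForcedBy (G □ ⊤) 3 ({(x, i), (y, j)} : Finset (V × Fin 3)) C) : i ≠ j := by
  rintro rfl
  have hdistinct : ∀ k : Fin 3, k ≠ k + 1 ∧ k ≠ k + 2 ∧ k + 1 ≠ k + 2 := by decide
  obtain ⟨hi₁, hi₂, h₁₂⟩ := hdistinct i
  have hswap := h.2 _ (h.1.precomp_layers (Equiv.swap (i + 1) (i + 2)).injective)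
    (by simp [Equiv.swap_apply_of_ne_of_ne hi₁ hi₂])
  have hx := congrFun hswap (x, i + 1)
  simp only [Equiv.swap_apply_left] at hx
  exact h.1 (boxProd_adj_right.mpr h₁₂.symm) hx

lemma IsForcedBy.ker_eq
    (h : IsForcedBy (G □ ⊤) 3 ({(x, i), (y, j)} : Finset (V × Fin 3)) C) (hij : i ≠ j)
    (hv : C (x, i) ≠ C (y, j)) {a : V → Fin 3} (ha : properCol G 3 a) (u v : V) :
    C (u, 0) = C (v, 0) ↔ a u = a v := by
  obtain ⟨L, hL, hx, hy⟩ := IsLatin.exists_fin_three (a x) (a y) hij hv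
  rw [← h.2 _ (ha.boxProd_latin properCol.top_id hL) (by simp [hx, hy])]
  exact (hL.2 0).eq_iff

end Pair

variable [Fintype V]

lemma chrom_boxProd_top (h : 3 ≤ chrom G) : chrom (G □ (⊤ : SimpleGraph (Fin 3))) = chrom G := by
  apply le_antisymm
  · obtain ⟨c, hc⟩ := exists_properCol_chrom (G := G)
    have : NeZero (chrom G) := ⟨by omega⟩
    exact (hc.boxProd_latin properCol.top_id
      (IsLatin.add.comp_right (Fin.castLE_injective h))).chrom_le
  · obtain ⟨C, hC⟩ := exists_properCol_chrom (G := G □ (⊤ : SimpleGraph (Fin 3)))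
    exact (hC.comp_hom (boxProdLeft G ⊤ 0).toHom).chrom_le

lemma exists_isForcingSet_boxProd_top (hG3 : chrom G = 3) (hN : Npart G 3 = 1) :
    ∃ D : Finset (V × Fin 3), D.card = 2 ∧ IsForcingSet (G □ (⊤ : SimpleGraph (Fin 3))) D := by
  classical
  obtain ⟨c₀, hc₀⟩ := exists_properCol_of_chrom_eq hG3
  have hsurj := hc₀.surjective hG3
  obtain ⟨x, hx⟩ := hsurj 0
  obtain ⟨y, hy⟩ := hsurj 1
  refine ⟨{(x, 0), (y, 1)}, Finset.card_pair (by simp), ?_⟩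
  exact (isForcingSet_iff ((chrom_boxProd_top hG3.ge).trans hG3)).mpr
    ⟨_, isForcedBy_of_Npart_eq_one hN hc₀ hsurj hx hy⟩

lemma Npart_eq_one_of_isForcingSet (hG3 : chrom G = 3) {D : Finset (V × Fin 3)}
    (hD : IsForcingSet (G □ ⊤) D) (hcard : D.card = 2) : Npart G 3 = 1 := by
  classical
  have hH3 : chrom (G □ (⊤ : SimpleGraph (Fin 3))) = 3 := (chrom_boxProd_top hG3.ge).trans hG3
  obtain ⟨C, hC⟩ := (isForcingSet_iff hH3).mp hD
  obtain ⟨⟨x, i⟩, ⟨y, j⟩, -, rfl⟩ := Finset.card_eq_two.mp hcard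
  have hv : C (x, i) ≠ C (y, j) := fun h => by
    simpa [h] using hC.le_card_image_add_one hH3
  obtain ⟨c, hc⟩ := exists_properCol_of_chrom_eq hG3
  refine Npart_eq_one_iff.mpr ⟨⟨c, hc⟩, fun a b ha hb u v => ?_⟩
  rw [← hC.ker_eq hC.snd_ne_snd hv ha, hC.ker_eq hC.snd_ne_snd hv hb]

end BoxTriangle

theorem stmt13 {V : Type*} [Fintype V] (G : SimpleGraph V)
    (hchi : 3 ≤ chrom G) :
    (chrom G = 3 ∧ Npart G 3 = 1) ↔
      Fchi (G.boxProd (⊤ : SimpleGraph (Fin 3))) = 2 := by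
  have hchrom := chrom_boxProd_top hchi
  constructor
  · rintro ⟨hG3, hN⟩
    obtain ⟨D, hcard, hD⟩ := exists_isForcingSet_boxProd_top hG3 hN
    have hupper := Fchi_le hD
    have hlower := hD.chrom_le_Fchi_add_one
    omega
  · intro hF
    obtain ⟨D, hcard, hD⟩ := exists_isForcingSet_card_Fchi (hF ▸ two_ne_zero)
    rw [hF] at hcard
    have hG3 : chrom G = 3 := by
      have hlower := hD.chrom_le_card_add_one
      omega
    exact ⟨hG3, Npart_eq_one_of_isForcingSet hG3 hD hcard⟩
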